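/- Let (b_k)_{k∈ℕ} be nonnegative reals, q > 0, with b_{k+1} ≤ b_k − q·b_k² for all k. Write b_k = c_k/k. Then for every k ≥ 1, c_k ≤ max{c_1, 1/q}. -/
import Mathlib


theorem stmt_1 (b : ℕ → ℝ) (q : ℝ) (hq : 0 < q)
    (hb : ∀ k, 0 ≤ b k)
    (hrec : ∀ k, b (k + 1) ≤ b k - q * (b k) ^ 2)
    (c : ℕ → ℝ) (hc : ∀ k, c k = k * b k) :
    ∀ k : ℕ, 1 ≤ k → c k ≤ max (c 1) (1 / q) := by
  intro k hk
  induction k, hk using Nat.le_induction with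
  | base => exact le_max_left _ _
  | succ n hn ih =>
    have hbn := hb n
    have hbn1 := hb (n + 1)
    have hr := hrec n
    have hnpos : (0:ℝ) < (n:ℝ) + 1 := by positivity
    rw [hc]
    push_cast
    rw [hc] at ih
    by_cases h : b n ≤ 1 / (q * ((n:ℝ) + 1))
    · have h2 : ((n:ℝ) + 1) * b n ≤ 1 / q := by
        rw [le_div_iff₀ (by positivity)] at h
        rw [le_div_iff₀ hq]
        nlinarith
      have : ((n:ℝ) + 1) * b (n + 1) ≤ ((n:ℝ) + 1) * b n := by
        nlinarith [mul_le_mul_of_nonneg_left hr hnpos.le,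
          mul_nonneg (mul_nonneg hq.le (sq_nonneg (b n))) hnpos.le]
      exact le_trans (le_trans this h2) (le_max_right _ _)
    · push_neg at h
      have h1 : (1:ℝ) / (q * ((n:ℝ) + 1)) ≤ b n := le_of_lt h
      rw [div_le_iff₀ (by positivity)] at h1
      have : ((n:ℝ) + 1) * b (n + 1) ≤ (n:ℝ) * b n := by
        nlinarith
      exact le_trans this ih
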